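/- Let f, g, h : {-1,1}^k → ℝ with g = ∑_{S : f̂(S) ≠ 0} sign(f̂(S)) χ_S, and let q ∈ [0,1], r, s ∈ [0,1] with r + s = 1. Then (∑_{S⊆[k]} q^{|S|} |f̂(S)|)² ≤ Stab_{q^{2r}}[f] · ∑_{S : f̂(S) ≠ 0} q^{2s|S|}. -/
import Mathlib


/-- Fourier coefficient of f : {-1,1}^k → ℝ on S. -/
noncomputable def fourierCoef {k : ℕ} (f : (Fin k → Bool) → ℝ) (S : Finset (Fin k)) : ℝ :=
  (2^k : ℝ)⁻¹ * ∑ x : Fin k → Bool, f x * ∏ i ∈ S, (if x i then (1:ℝ) else -1)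

theorem stmt16 (k : ℕ) (f : (Fin k → Bool) → ℝ) (q r s : ℝ)
    (hq0 : 0 ≤ q) (hq1 : q ≤ 1) (hr0 : 0 ≤ r) (hr1 : r ≤ 1)
    (hs0 : 0 ≤ s) (hs1 : s ≤ 1) (hrs : r + s = 1) :
    (∑ S : Finset (Fin k), q ^ S.card * |fourierCoef f S|)^2
      ≤ (∑ S : Finset (Fin k), (q ^ (2 * r)) ^ S.card * (fourierCoef f S)^2) *
        (∑ S : Finset (Fin k), if fourierCoef f S ≠ 0 then (q ^ (2 * s)) ^ S.card else 0) := by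
  set F := fun S : Finset (Fin k) => (q ^ r) ^ S.card * |fourierCoef f S| with hF
  set G := fun S : Finset (Fin k) =>
    if fourierCoef f S ≠ 0 then (q ^ s) ^ S.card else 0 with hG
  have key := Finset.sum_mul_sq_le_sq_mul_sq Finset.univ F G
  have hqq : q ^ r * q ^ s = q := by
    rw [← Real.rpow_add' hq0 (by rw [hrs]; norm_num)]
    rw [hrs, Real.rpow_one]
  have h1 : ∀ S : Finset (Fin k),
      q ^ S.card * |fourierCoef f S| = F S * G S := by
    intro S
    simp only [hF, hG]
    by_cases h : fourierCoef f S = 0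
    · simp [h]
    · rw [if_pos h, mul_right_comm, ← mul_pow, hqq]
  have h2 : ∀ S : Finset (Fin k),
      F S ^ 2 = (q ^ (2 * r)) ^ S.card * (fourierCoef f S)^2 := by
    intro S
    simp only [hF]
    rw [mul_pow, sq_abs, ← pow_mul, ← Real.rpow_natCast (q ^ r),
      ← Real.rpow_natCast (q ^ (2 * r)),
      ← Real.rpow_mul hq0, ← Real.rpow_mul hq0]
    congr 1
    push_cast
    ring
  have h3 : ∀ S : Finset (Fin k),
      G S ^ 2 = (if fourierCoef f S ≠ 0 then (q ^ (2 * s)) ^ S.card else 0) := by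
    intro S
    simp only [hG]
    by_cases h : fourierCoef f S = 0
    · simp [h]
    · rw [if_pos h, if_pos h, ← pow_mul, ← Real.rpow_natCast (q ^ s),
        ← Real.rpow_natCast (q ^ (2 * s)),
        ← Real.rpow_mul hq0, ← Real.rpow_mul hq0]
      congr 1
      push_cast
      ring
  simp only [h1]
  calc (∑ S : Finset (Fin k), F S * G S) ^ 2
      ≤ (∑ S : Finset (Fin k), F S ^ 2) * (∑ S : Finset (Fin k), G S ^ 2) := key
    _ = _ := by rw [Finset.sum_congr rfl fun S _ => h2 S, Finset.sum_congr rfl fun S _ => h3 S]
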